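/- arXiv:1207.3593 — 9 statements merged into one kernel-verified Lean document; each statement's English description precedes it below -/
import Mathlib

section
/- Let V and V' be left vector spaces over division rings R and R' respectively, with dim V = n finite and n ≥ 3. Let g : V → V' be a non-trivial GL-mapping such that the R'-subspace of V' spanned by the image g(V) has dimension at most n. Then g is a strong semilinear embedding: there exist a ring homomorphism σ : R → R' and a σ-semilinear injective map l : V → V' with g = l, such that l sends every n linearly independent vectors of V to linearly independent vectors of V'. -/
/-!
`GL(V)` acts transitively on linearly independent families, so a relation among the values of `g`
on one such family holds on all of them. A transvection fixing a hyperplane `H` pointwise and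
moving `w ∉ H` therefore induces an automorphism of `V'` fixing `g(H)` pointwise and moving
`g(w)`, since `g` separates independent pairs. Hence `g` maps independent families to independent
families and, by the dimension bound, `span s` into `span g(s)` for every independent family `s`.
So `g 0 = 0`, `g (a • x) = σ a • g x`, and `g (x + y) = α • g x + β • g y` on independent pairs
with constants `α, β`. Swapping `x, y` gives `α = β`; expanding `g (x + y + z)` in two ways for
`z ∉ span {x, y}` gives `α = 1`, and the same `z` reduces additivity on dependent pairs to
independent ones.
-/

open Module Submodule Set

section LinearAlgebra

variable {R V : Type*} [DivisionRing R] [AddCommGroup V] [Module R V]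

theorem Module.Basis.sumExtend_apply_inl {ι : Type*} {s : ι → V} (hs : LinearIndependent R s)
    (i : ι) : Basis.sumExtend hs (Sum.inl i) = s i := by
  simp only [Basis.sumExtend, Basis.reindex_apply, Basis.coe_extend]
  rfl

theorem exists_linearEquiv_apply_eq [FiniteDimensional R V] {ι : Type*} {s t : ι → V}
    (hs : LinearIndependent R s) (ht : LinearIndependent R t) :
    ∃ u : V ≃ₗ[R] V, ∀ i, u (s i) = t i := by
  let bs := Basis.sumExtend hs
  let bt := Basis.sumExtend ht
  have := Module.Finite.finite_basis bs
  have := Module.Finite.finite_basis bt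
  have := hs.finite
  have := Finite.sum_right ι (β := Basis.sumExtendIndex hs)
  have := Finite.sum_right ι (β := Basis.sumExtendIndex ht)
  obtain ⟨e⟩ : Nonempty (Basis.sumExtendIndex hs ≃ Basis.sumExtendIndex ht) := by
    have h := (finrank_eq_nat_card_basis bs).symm.trans (finrank_eq_nat_card_basis bt)
    rw [Nat.card_sum, Nat.card_sum] at h
    exact Finite.card_eq.mp (by omega)
  refine ⟨bs.equiv bt ((Equiv.refl ι).sumCongr e), fun i => ?_⟩
  rw [← Basis.sumExtend_apply_inl hs, bs.equiv_apply]
  exact Basis.sumExtend_apply_inl ht i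

theorem exists_notMem_span_range [FiniteDimensional R V] {ι : Type*} [Fintype ι] (v : ι → V)
    (h : Fintype.card ι < finrank R V) : ∃ z, z ∉ span R (range v) := by
  by_contra! hv
  have htop : span R (range v) = ⊤ := eq_top_iff'.mpr hv
  have := finrank_range_le_card (R := R) v
  rw [Set.finrank, htop, finrank_top] at this
  omega

theorem linearIndependent_pair_of_notMem_span {x y : V} (hx : x ≠ 0) (hy : y ∉ span R {x}) :
    LinearIndependent R ![x, y] :=
  (LinearIndependent.pair_iff' hx).mpr fun a hxy => hy (mem_span_singleton.mpr ⟨a, hxy⟩)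

theorem exists_notMem_span_singleton [FiniteDimensional R V] (h2 : 2 ≤ finrank R V) (x : V) :
    ∃ y, y ∉ span R {x} := by
  simpa only [range_const] using
    exists_notMem_span_range (R := R) (fun _ : Unit => x) (by rw [Fintype.card_unit]; omega)

theorem exists_notMem_span_pair [FiniteDimensional R V] (h3 : 3 ≤ finrank R V) (x y : V) :
    ∃ z, z ∉ span R {x, y} := by
  simpa only [Matrix.range_cons_cons_empty] using
    exists_notMem_span_range (R := R) ![x, y] (by rw [Fintype.card_fin]; omega)

theorem exists_linearIndependent_pair [FiniteDimensional R V] (h2 : 2 ≤ finrank R V) :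
    ∃ x y : V, LinearIndependent R ![x, y] := by
  obtain ⟨x, hx⟩ := finrank_pos_iff_exists_ne_zero.mp (by omega : 0 < finrank R V)
  obtain ⟨y, hy⟩ := exists_notMem_span_singleton h2 x
  exact ⟨x, y, linearIndependent_pair_of_notMem_span hx hy⟩

theorem exists_ne_zero_apply_eq_zero [FiniteDimensional R V] (h2 : 2 ≤ finrank R V)
    (f : Dual R V) : ∃ v ≠ 0, f v = 0 := by
  have hrange : finrank R (LinearMap.range f) ≤ 1 :=
    (Submodule.finrank_le _).trans (finrank_self R).le
  have hker := LinearMap.finrank_range_add_finrank_ker f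
  obtain ⟨v, hv, hv0⟩ := Submodule.exists_mem_ne_zero_of_ne_bot
    (p := LinearMap.ker f) (fun h => by rw [h, finrank_bot] at hker; omega)
  exact ⟨v, hv0, hv⟩

theorem coeff_eq_zero_of_apply_sum_eq {ι : Type*} [Fintype ι] (u : V →ₗ[R] V) {v : ι → V}
    {c : ι → R} {m : ι} (hfix : ∀ i ≠ m, u (v i) = v i) (hmove : u (v m) ≠ v m)
    (h : u (∑ i, c i • v i) = ∑ i, c i • v i) : c m = 0 := by
  rw [map_sum, ← sub_eq_zero, ← Finset.sum_sub_distrib] at h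
  simp_rw [map_smul, ← smul_sub] at h
  rw [Finset.sum_eq_single m (fun i _ hi => by rw [hfix i hi, sub_self, smul_zero])
    (fun h => absurd (Finset.mem_univ m) h)] at h
  exact (smul_eq_zero.mp h).resolve_right (sub_ne_zero.mpr hmove)

theorem notMem_span_singleton_of_notMem_span_pair {x y z w : V} (hz : z ∉ span R {x, y})
    (hw : w ∈ span R {x, y}) : z ∉ span R {w} :=
  fun h => hz ((span_singleton_le_iff_mem w _).mpr hw h)

theorem add_notMem_span_singleton_of_notMem_span_pair {x y z : V} (hz : z ∉ span R {x, y}) :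
    y + z ∉ span R {x} := fun h => hz <| by
  simpa using sub_mem (span_mono (by simp) h) (subset_span (by simp) : y ∈ span R {x, y})

end LinearAlgebra

theorem exists_semilinearMap_coe_eq {R R' V V' : Type*} [DivisionRing R] [DivisionRing R']
    [AddCommGroup V] [Module R V] [AddCommGroup V'] [Module R' V'] {g : V → V'}
    (hadd : ∀ x y, g (x + y) = g x + g y) (hsmul : ∀ a : R, ∃ c : R', ∀ x, g (a • x) = c • g x)
    {x₀ : V} (hx₀ : g x₀ ≠ 0) : ∃ (σ : R →+* R') (l : V →ₛₗ[σ] V'), ⇑l = g := by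
  choose σ hσ using hsmul
  have hg0 : g 0 = 0 := by simpa using hadd 0 0
  have hσ_eq : ∀ {a b : R'}, a • g x₀ = b • g x₀ → a = b := fun h => smul_left_injective R' hx₀ h
  let σ' : R →+* R' :=
    { toFun := σ
      map_one' := hσ_eq (by rw [← hσ, one_smul, one_smul])
      map_mul' := fun a b => hσ_eq (by rw [← hσ, mul_smul, hσ, hσ, smul_smul])
      map_zero' := hσ_eq (by rw [← hσ, zero_smul, zero_smul, hg0])
      map_add' := fun a b => hσ_eq (by rw [← hσ, add_smul, hadd, hσ, hσ, add_smul]) }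
  exact ⟨σ', { toFun := g, map_add' := hadd, map_smul' := hσ }, rfl⟩

section GLMapping

variable {R R' V V' : Type*} [DivisionRing R] [DivisionRing R']
  [AddCommGroup V] [Module R V] [AddCommGroup V'] [Module R' V'] {g : V → V'}

variable (R R') in
def IsGLMapping (g : V → V') : Prop :=
  ∀ u : V ≃ₗ[R] V, ∃ u' : V' ≃ₗ[R'] V', g ∘ ⇑u = ⇑u' ∘ g

variable (R R') in
structure IsNontrivialGLMapping (g : V → V') : Prop where
  isGLMapping : IsGLMapping R R' g
  exists_apply_ne : ∃ x y : V, x ≠ 0 ∧ y ≠ 0 ∧ g x ≠ g y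

theorem IsGLMapping.exists_apply_eq (hg : IsGLMapping R R' g) (u : V ≃ₗ[R] V) :
    ∃ u' : V' ≃ₗ[R'] V', ∀ x, g (u x) = u' (g x) :=
  (hg u).imp fun _ h x => congrFun h x

theorem IsGLMapping.exists_apply_eq_of_linearIndependent [FiniteDimensional R V]
    (hg : IsGLMapping R R' g) {ι : Type*} {s t : ι → V}
    (hs : LinearIndependent R s) (ht : LinearIndependent R t) :
    ∃ u : V ≃ₗ[R] V, ∃ u' : V' ≃ₗ[R'] V', (∀ i, u (s i) = t i) ∧ ∀ x, g (u x) = u' (g x) := by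
  obtain ⟨u, hu⟩ := exists_linearEquiv_apply_eq hs ht
  obtain ⟨u', hu'⟩ := hg.exists_apply_eq u
  exact ⟨u, u', hu, hu'⟩

namespace IsNontrivialGLMapping

variable [FiniteDimensional R V] (hg : IsNontrivialGLMapping R R' g)
include hg

theorem apply_ne_zero {x : V} (hx : x ≠ 0) : g x ≠ 0 := by
  intro hgx
  have hzero : ∀ y ≠ 0, g y = 0 := fun y hy => by
    obtain ⟨u, u', hu, hu'⟩ := hg.isGLMapping.exists_apply_eq_of_linearIndependent
      (s := fun _ : Unit => x) (t := fun _ => y)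
      (linearIndependent_unique_iff (R := R).mpr hx) (linearIndependent_unique_iff.mpr hy)
    rw [← hu (), hu', hgx, map_zero]
  obtain ⟨y, z, hy, hz, hyz⟩ := hg.exists_apply_ne
  exact hyz ((hzero y hy).trans (hzero z hz).symm)

theorem apply_ne_apply (h2 : 2 ≤ finrank R V) {x y : V} (hxy : LinearIndependent R ![x, y]) :
    g x ≠ g y := by
  intro hgxy
  have hpair : ∀ p q, LinearIndependent R ![p, q] → g p = g q := fun p q hpq => by
    obtain ⟨u, u', hu, hu'⟩ := hg.isGLMapping.exists_apply_eq_of_linearIndependent hxy hpq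
    have hup : u x = p := hu 0
    have huq : u y = q := hu 1
    rw [← hup, ← huq, hu', hu', hgxy]
  have hconst : ∀ p ≠ 0, ∀ q ≠ 0, g p = g q := fun p hp q hq => by
    by_cases hpq : LinearIndependent R ![p, q]
    · exact hpair p q hpq
    obtain ⟨z, hz⟩ := exists_notMem_span_singleton h2 p
    have hqp : q ∈ span R {p} := by
      by_contra hqp
      exact hpq (linearIndependent_pair_of_notMem_span hp hqp)
    have hzq : z ∉ span R {q} := fun h => hz ((span_singleton_le_iff_mem q _).mpr hqp h)
    exact (hpair p z (linearIndependent_pair_of_notMem_span hp hz)).trans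
      (hpair q z (linearIndependent_pair_of_notMem_span hq hzq)).symm
  obtain ⟨p, q, hp, hq, hpq⟩ := hg.exists_apply_ne
  exact hpq (hconst p hp q hq)

theorem exists_fixing_image_ker_not_fixing (h2 : 2 ≤ finrank R V) (f : Dual R V) {w : V}
    (hw : f w ≠ 0) :
    ∃ u' : V' ≃ₗ[R'] V', (∀ z, f z = 0 → u' (g z) = g z) ∧ u' (g w) ≠ g w := by
  obtain ⟨v, hv0, hv⟩ := exists_ne_zero_apply_eq_zero h2 f
  obtain ⟨u', hu'⟩ := hg.isGLMapping.exists_apply_eq (LinearEquiv.transvection hv)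
  refine ⟨u', fun z hz => ?_, ?_⟩
  · rw [← hu', LinearEquiv.transvection.apply, hz, zero_smul, add_zero]
  · have hw' : w ∉ span R {f w • v} := fun h =>
      hw ((span_singleton_le_iff_mem _ (LinearMap.ker f)).mpr (by simp [hv]) h)
    have hpair : LinearIndependent R ![w, w + f w • v] :=
      LinearIndependent.pair_add_right_iff.mpr <| LinearIndependent.pair_symm_iff.mp <|
        linearIndependent_pair_of_notMem_span (smul_ne_zero hw hv0) hw'
    rw [← hu', LinearEquiv.transvection.apply]
    exact (hg.apply_ne_apply h2 hpair).symm

theorem linearIndependent_comp (h2 : 2 ≤ finrank R V) {ι : Type*} {s : ι → V}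
    (hs : LinearIndependent R s) : LinearIndependent R' (g ∘ s) := by
  classical
  rw [linearIndependent_iff_notMem_span]
  intro i hmem
  let b := Basis.sumExtend hs
  have hcoord : ∀ k, b.coord (Sum.inl i) (s k) = if k = i then 1 else 0 := fun k => by
    rw [← Basis.sumExtend_apply_inl hs, Basis.coord_apply, Basis.repr_self,
      Finsupp.single_apply]
    simp [eq_comm]
  obtain ⟨u', hfix, hmove⟩ :=
    hg.exists_fixing_image_ker_not_fixing h2 (b.coord (Sum.inl i)) (w := s i) (by simp [hcoord])
  have hle : span R' (g ∘ s '' (univ \ {i})) ≤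
      LinearMap.eqLocus (u' : V' →ₗ[R'] V') LinearMap.id := by
    rw [span_le]
    rintro _ ⟨k, hk, rfl⟩
    exact hfix (s k) (by simpa [hcoord] using hk)
  exact hmove (hle hmem)

theorem linearIndependent_apply_pair (h2 : 2 ≤ finrank R V) {x y : V}
    (hxy : LinearIndependent R ![x, y]) : LinearIndependent R' ![g x, g y] := by
  convert hg.linearIndependent_comp h2 hxy using 1
  ext i
  fin_cases i <;> rfl

section SpanBound

variable (hspan : Module.rank R' (span R' (range g)) ≤ finrank R V)
include hspan

theorem span_range_comp_basis_eq (h2 : 2 ≤ finrank R V) {ι : Type*} (b : Basis ι R V) :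
    span R' (range (g ∘ b)) = span R' (range g) := by
  have := Module.Finite.finite_basis b
  have := Fintype.ofFinite ι
  have : FiniteDimensional R' (span R' (range g)) :=
    Module.rank_lt_aleph0_iff.mp (hspan.trans_lt Cardinal.natCast_lt_aleph0)
  refine eq_of_le_of_finrank_le (span_mono (range_comp_subset_range b g)) ?_
  rw [finrank_span_eq_card (hg.linearIndependent_comp h2 b.linearIndependent),
    ← finrank_eq_card_basis b]
  exact finrank_le_of_rank_le hspan

theorem apply_mem_span_range_comp (h2 : 2 ≤ finrank R V) {ι : Type*} {s : ι → V}
    (hs : LinearIndependent R s) {z : V} (hz : z ∈ span R (range s)) :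
    g z ∈ span R' (range (g ∘ s)) := by
  let b := Basis.sumExtend hs
  have := Module.Finite.finite_basis b
  have := hs.finite
  have := Finite.sum_right ι (β := Basis.sumExtendIndex hs)
  have := Fintype.ofFinite ι
  have := Fintype.ofFinite (Basis.sumExtendIndex hs)
  obtain ⟨c, hc⟩ := (mem_span_range_iff_exists_fun R').mp
    ((hg.span_range_comp_basis_eq hspan h2 b).ge (subset_span ⟨z, rfl⟩))
  have hc0 : ∀ k, c (Sum.inr k) = 0 := fun k => by
    have hker : span R (range s) ≤ LinearMap.ker (b.coord (Sum.inr k)) := by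
      rw [span_le]
      rintro _ ⟨i, rfl⟩
      simp [← Basis.sumExtend_apply_inl hs, b]
    obtain ⟨u', hfix, hmove⟩ := hg.exists_fixing_image_ker_not_fixing h2
      (b.coord (Sum.inr k)) (w := b (Sum.inr k)) (by simp)
    refine coeff_eq_zero_of_apply_sum_eq (u' : V' →ₗ[R'] V') (v := g ∘ b)
      (fun a ha => hfix _ ?_) hmove ?_
    · simp [Ne.symm ha]
    · rw [hc]
      exact hfix z (hker hz)
  rw [← hc, Fintype.sum_sum_type]
  simp only [hc0, zero_smul, Finset.sum_const_zero, add_zero]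
  exact sum_mem fun i _ => smul_mem _ _ (subset_span ⟨i, by simp [b, Basis.sumExtend_apply_inl]⟩)

theorem apply_zero (h2 : 2 ≤ finrank R V) : g 0 = 0 := by
  simpa [range_eq_empty] using hg.apply_mem_span_range_comp hspan h2
    (linearIndependent_empty_type (v := (Empty.elim : Empty → V))) (zero_mem _)

theorem exists_apply_smul_eq (h2 : 2 ≤ finrank R V) (a : R) :
    ∃ c : R', ∀ x, g (a • x) = c • g x := by
  obtain ⟨p, hp⟩ := finrank_pos_iff_exists_ne_zero.mp (by omega : 0 < finrank R V)
  have hp' : LinearIndependent R (fun _ : Unit => p) := linearIndependent_unique_iff.mpr hp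
  have hmem := hg.apply_mem_span_range_comp hspan h2 hp' (z := a • p)
    (by rw [range_const]; exact smul_mem _ _ (mem_span_singleton_self p))
  rw [range_comp, range_const, image_singleton, mem_span_singleton] at hmem
  obtain ⟨c, hc⟩ := hmem
  refine ⟨c, fun x => ?_⟩
  rcases eq_or_ne x 0 with rfl | hx
  · rw [smul_zero, hg.apply_zero hspan h2, smul_zero]
  obtain ⟨u, u', hu, hu'⟩ := hg.isGLMapping.exists_apply_eq_of_linearIndependent hp'
    (linearIndependent_unique_iff (v := fun _ : Unit => x) |>.mpr hx)
  rw [← hu (), ← map_smul, hu', hu', ← hc, map_smul]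

theorem exists_apply_add_eq (h2 : 2 ≤ finrank R V) :
    ∃ α β : R', ∀ x y, LinearIndependent R ![x, y] → g (x + y) = α • g x + β • g y := by
  obtain ⟨p, q, hpq⟩ := exists_linearIndependent_pair h2
  have hmem := hg.apply_mem_span_range_comp hspan h2 hpq (z := p + q)
    (add_mem (subset_span ⟨0, rfl⟩) (subset_span ⟨1, rfl⟩))
  rw [range_comp, Matrix.range_cons_cons_empty, image_pair, mem_span_pair] at hmem
  obtain ⟨α, β, hαβ⟩ := hmem
  refine ⟨α, β, fun x y hxy => ?_⟩
  obtain ⟨u, u', hu, hu'⟩ := hg.isGLMapping.exists_apply_eq_of_linearIndependent hpq hxy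
  have hup : u p = x := hu 0
  have huq : u q = y := hu 1
  rw [← hup, ← huq, ← map_add, hu', hu', hu', ← hαβ, map_add, map_smul, map_smul]

theorem exists_apply_add_eq_smul_add (h2 : 2 ≤ finrank R V) :
    ∃ α : R', ∀ x y, LinearIndependent R ![x, y] → g (x + y) = α • (g x + g y) := by
  obtain ⟨α, β, hαβ⟩ := hg.exists_apply_add_eq hspan h2
  obtain ⟨x, y, hxy⟩ := exists_linearIndependent_pair h2
  have hswap := hαβ y x (LinearIndependent.pair_symm_iff.mp hxy)
  rw [add_comm, hαβ x y hxy] at hswap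
  have hβ : α - β = 0 := (LinearIndependent.pair_iff.mp (hg.linearIndependent_apply_pair h2 hxy)
    (α - β) (β - α) (by rw [sub_smul, sub_smul]; linear_combination (norm := abel) hswap)).1
  refine ⟨α, fun x y hxy => ?_⟩
  rw [hαβ x y hxy, ← sub_eq_zero.mp hβ, smul_add]

theorem apply_add_of_linearIndependent (h3 : 3 ≤ finrank R V) {x y : V}
    (hxy : LinearIndependent R ![x, y]) : g (x + y) = g x + g y := by
  have h2 : 2 ≤ finrank R V := by omega
  obtain ⟨α, hα⟩ := hg.exists_apply_add_eq_smul_add hspan h2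
  obtain ⟨z, hz⟩ := exists_notMem_span_pair h3 x y
  have hx : x ≠ 0 := hxy.ne_zero 0
  have hxy0 : x + y ≠ 0 := (LinearIndependent.pair_add_left_iff.mpr hxy).ne_zero 0
  have hz₁ : z ∉ span R {x + y} := notMem_span_singleton_of_notMem_span_pair hz
    (add_mem (subset_span (by simp)) (subset_span (by simp)))
  have hz₂ : y + z ∉ span R {x} := add_notMem_span_singleton_of_notMem_span_pair hz
  have hz₃ : z ∉ span R {y} := notMem_span_singleton_of_notMem_span_pair hz (subset_span (by simp))
  have hz₄ : z ∉ span R {x} := notMem_span_singleton_of_notMem_span_pair hz (subset_span (by simp))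
  have e₁ : g (x + y + z) = α • (α • (g x + g y) + g z) := by
    rw [hα _ _ (linearIndependent_pair_of_notMem_span hxy0 hz₁), hα x y hxy]
  have e₂ : g (x + y + z) = α • (g x + α • (g y + g z)) := by
    rw [add_assoc, hα _ _ (linearIndependent_pair_of_notMem_span hx hz₂),
      hα y z (linearIndependent_pair_of_notMem_span (hxy.ne_zero 1) hz₃)]
  have hα1 : α * α - α = 0 := by
    refine (LinearIndependent.pair_iff.mp (hg.linearIndependent_apply_pair h2
      (linearIndependent_pair_of_notMem_span hx hz₄)) (α * α - α) (α - α * α) ?_).1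
    have := e₁.symm.trans e₂
    simp only [smul_add, smul_smul] at this
    rw [sub_smul, sub_smul]
    linear_combination (norm := abel) this
  have hα0 : α ≠ 0 := by
    rintro rfl
    exact hg.apply_ne_zero hxy0 (by rw [hα x y hxy, zero_smul])
  have : α = 1 := mul_left_cancel₀ hα0 (by rw [mul_one]; exact sub_eq_zero.mp hα1)
  rw [hα x y hxy, this, one_smul]

theorem apply_add_of_notMem_span (h3 : 3 ≤ finrank R V) {x z : V} (hz : z ∉ span R {x}) :
    g (x + z) = g x + g z := by
  rcases eq_or_ne x 0 with rfl | hx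
  · rw [zero_add, hg.apply_zero hspan (by omega), zero_add]
  · exact hg.apply_add_of_linearIndependent hspan h3 (linearIndependent_pair_of_notMem_span hx hz)

theorem apply_add (h3 : 3 ≤ finrank R V) (x y : V) : g (x + y) = g x + g y := by
  obtain ⟨z, hz⟩ := exists_notMem_span_pair h3 x y
  refine add_right_cancel (b := g z) ?_
  calc g (x + y) + g z = g (x + (y + z)) := by
        rw [← add_assoc, hg.apply_add_of_notMem_span hspan h3
          (notMem_span_singleton_of_notMem_span_pair hz
            (add_mem (subset_span (by simp)) (subset_span (by simp))))]
    _ = g x + g y + g z := by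
        rw [hg.apply_add_of_notMem_span hspan h3 (add_notMem_span_singleton_of_notMem_span_pair hz),
          hg.apply_add_of_notMem_span hspan h3
            (notMem_span_singleton_of_notMem_span_pair hz (subset_span (by simp))), add_assoc]

end SpanBound

end IsNontrivialGLMapping

end GLMapping

/-- **Theorem 1 (Pankov).** Let `V`, `V'` be left vector spaces over division rings `R`, `R'`,
with `dim V = n` finite, `n ≥ 3`. If `g : V → V'` is a non-trivial GL-mapping and the
subspace of `V'` spanned by `g(V)` has dimension at most `n`, then `g` is a strong
semilinear embedding. -/
theorem stmt_0 {R R' V V' : Type*} [DivisionRing R] [DivisionRing R']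
    [AddCommGroup V] [Module R V] [AddCommGroup V'] [Module R' V']
    (n : ℕ) (hn : 3 ≤ n) [FiniteDimensional R V] (hdim : Module.finrank R V = n)
    (g : V → V')
    (hGL : ∀ u : V ≃ₗ[R] V, ∃ u' : V' ≃ₗ[R'] V', g ∘ ⇑u = ⇑u' ∘ g)
    (hnt : ∃ x y : V, x ≠ 0 ∧ y ≠ 0 ∧ g x ≠ g y)
    (hspan : Module.rank R' (Submodule.span R' (Set.range g)) ≤ n) :
    ∃ (σ : R →+* R') (l : V →ₛₗ[σ] V'),
      ⇑l = g ∧ Function.Injective l ∧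
      ∀ v : Fin n → V, LinearIndependent R v → LinearIndependent R' (⇑l ∘ v) := by
  subst hdim
  have hg : IsNontrivialGLMapping R R' g := ⟨hGL, hnt⟩
  obtain ⟨x₀, hx₀⟩ := finrank_pos_iff_exists_ne_zero.mp (by omega : 0 < finrank R V)
  obtain ⟨σ, l, rfl⟩ := exists_semilinearMap_coe_eq (hg.apply_add hspan hn)
    (hg.exists_apply_smul_eq hspan (by omega)) (hg.apply_ne_zero hx₀)
  refine ⟨σ, l, rfl, (injective_iff_map_eq_zero l).mpr fun x hx => ?_,
    fun v hv => hg.linearIndependent_comp (by omega) hv⟩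
  exact not_imp_not.mp (hg.apply_ne_zero (x := x)) hx
end

section
/- Let V be a left vector space over a division ring R and let X be a finite subset of V containing more than one vector. If every permutation of X extends to a linear automorphism of V (i.e., for every bijection p : X → X there exists a linear automorphism u of V with u(x) = p(x) for all x ∈ X), then either X consists of linearly independent vectors, or X consists of vectors x₁, …, x_m, −(x₁ + ⋯ + x_m) where x₁, …, x_m are linearly independent. -/
/-!
If the transposition of `a, b ∈ X` extends to a linear map `u`, applying `u` to a relation
`∑ cₓ • x = 0` and subtracting the original relation leaves `(c_b - c_a) • (a - b) = 0`.
So every linear relation among the vectors of `X` has constant coefficients. If `X` is dependent, it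
follows that its vectors sum to zero, while removing any one vector `x₀` leaves an independent
family, whose sum is `-x₀`.
-/

open Equiv

section

variable {R V ι : Type*} [DivisionRing R] [AddCommGroup V] [Module R V] [Fintype ι]

variable (R) in
def HasConstantRelations (v : ι → V) : Prop :=
  ∀ c : ι → R, ∑ k, c k • v k = 0 → ∀ i j, c i = c j

theorem coeff_eq_of_map_eq_swap [DecidableEq ι] {v : ι → V} (hv : Function.Injective v)
    {c : ι → R} (hc : ∑ k, c k • v k = 0) {i j : ι} (u : V →ₗ[R] V)
    (hu : ∀ k, u (v k) = v (swap i j k)) :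
    c i = c j := by
  rcases eq_or_ne i j with rfl | hij
  · rfl
  have hcu : ∑ k, c k • v (swap i j k) = 0 := by
    simpa only [map_sum, map_smul, hu, map_zero] using congr(u $hc)
  have hcswap : ∑ k, c (swap i j k) • v k = 0 := by
    rw [← hcu, ← Equiv.sum_comp (swap i j)]
    simp only [swap_apply_self]
  have hdiff : ∑ k, (c (swap i j k) - c k) • v k = 0 := by
    simp only [sub_smul, Finset.sum_sub_distrib, hcswap, hc, sub_zero]
  have hpair : (c j - c i) • (v i - v j) = 0 := by
    rwa [Fintype.sum_eq_add i j hij fun k hk => by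
        rw [swap_apply_of_ne_of_ne hk.1 hk.2, sub_self, zero_smul],
      swap_apply_left, swap_apply_right, ← neg_sub (c j), neg_smul, ← sub_eq_add_neg,
      ← smul_sub] at hdiff
  rcases smul_eq_zero.1 hpair with h | h
  · exact (sub_eq_zero.1 h).symm
  · exact absurd (hv (sub_eq_zero.1 h)) hij

theorem hasConstantRelations_of_swap [DecidableEq ι] {v : ι → V} (hv : Function.Injective v)
    (hswap : ∀ i j, ∃ u : V →ₗ[R] V, ∀ k, u (v k) = v (swap i j k)) :
    HasConstantRelations R v := fun _ hc i j =>
  let ⟨u, hu⟩ := hswap i j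
  coeff_eq_of_map_eq_swap hv hc u hu

namespace HasConstantRelations

variable {v : ι → V}

theorem sum_eq_zero (hv : HasConstantRelations R v) (hli : ¬LinearIndependent R v) :
    ∑ k, v k = 0 := by
  obtain ⟨c, hc, i, hci⟩ := Fintype.not_linearIndependent_iff.1 hli
  have hconst : c = fun _ => c i := funext fun k => hv c hc k i
  rw [hconst, ← Finset.smul_sum] at hc
  exact (smul_eq_zero.1 hc).resolve_left hci

theorem linearIndependent_subtype_ne [DecidableEq ι] (hv : HasConstantRelations R v)
    (i₀ : ι) : LinearIndependent R fun k : {k // k ≠ i₀} => v k := by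
  refine Fintype.linearIndependent_iff.2 fun c hc k => ?_
  let c' : ι → R := fun k => if h : k = i₀ then 0 else c ⟨k, h⟩
  have hc'i₀ : c' i₀ = 0 := dif_pos rfl
  have hc'ne (k : {k // k ≠ i₀}) : c' k = c k := dif_neg k.2
  have hc' : ∑ k, c' k • v k = 0 := by
    rw [Fintype.sum_eq_add_sum_subtype_ne _ i₀, hc'i₀, zero_smul, zero_add]
    simpa only [hc'ne] using hc
  simpa only [hc'ne, hc'i₀] using hv c' hc' k i₀

end HasConstantRelations

theorem exists_linearIndependent_fin_range_eq_union_neg_sum [DecidableEq ι] {v : ι → V}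
    (i₀ : ι) (hli : LinearIndependent R fun k : {k // k ≠ i₀} => v k)
    (hsum : ∑ k, v k = 0) :
    ∃ (m : ℕ) (w : Fin m → V), LinearIndependent R w ∧
      Set.range v = Set.range w ∪ {-(∑ i, w i)} := by
  let e := Fintype.equivFin {k // k ≠ i₀}
  refine ⟨_, fun i => v (e.symm i), hli.comp _ e.symm.injective, ?_⟩
  rw [Fintype.sum_eq_add_sum_subtype_ne _ i₀, add_eq_zero_iff_neg_eq'] at hsum
  rw [e.symm.sum_comp (fun k => v k), hsum]
  ext z
  constructor
  · rintro ⟨k, rfl⟩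
    by_cases hk : k = i₀
    · exact .inr (congrArg v hk)
    · exact .inl ⟨e ⟨k, hk⟩, by simp⟩
  · rintro (⟨i, rfl⟩ | rfl)
    exacts [⟨_, rfl⟩, ⟨i₀, rfl⟩]

end

theorem stmt_2_general {R V : Type*} [DivisionRing R] [AddCommGroup V] [Module R V]
    (X : Finset V)
    (hperm : ∀ p : {x // x ∈ X} ≃ {x // x ∈ X},
      ∃ u : V ≃ₗ[R] V, ∀ x : {x // x ∈ X}, u (x : V) = (p x : V)) :
    LinearIndependent R (fun x : {x // x ∈ X} => (x : V)) ∨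
    ∃ (m : ℕ) (v : Fin m → V), LinearIndependent R v ∧
      (X : Set V) = Set.range v ∪ {-(∑ i, v i)} := by
  classical
  refine or_iff_not_imp_left.2 fun hli => ?_
  have hconst : HasConstantRelations R fun x : {x // x ∈ X} => (x : V) := by
    refine hasConstantRelations_of_swap Subtype.val_injective fun i j => ?_
    obtain ⟨u, hu⟩ := hperm (swap i j)
    exact ⟨u.toLinearMap, hu⟩
  obtain ⟨x₀⟩ : Nonempty {x // x ∈ X} :=
    not_isEmpty_iff.1 fun _ => hli linearIndependent_empty_type
  rw [show (X : Set V) = Set.range fun x : {x // x ∈ X} => (x : V) by simp]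
  exact exists_linearIndependent_fin_range_eq_union_neg_sum x₀
    (hconst.linearIndependent_subtype_ne x₀) (hconst.sum_eq_zero hli)

/-- **Proposition 1 (Pankov).** If every permutation of a finite subset `X ⊂ V` with
more than one element extends to a linear automorphism of `V`, then `X` consists of
linearly independent vectors, or consists of `x₁, …, x_m, -(x₁ + ⋯ + x_m)` with
`x₁, …, x_m` linearly independent. -/
theorem stmt_2 {R V : Type*} [DivisionRing R] [AddCommGroup V] [Module R V]
    (X : Finset V) (hX : 1 < X.card)
    (hperm : ∀ p : {x // x ∈ X} ≃ {x // x ∈ X},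
      ∃ u : V ≃ₗ[R] V, ∀ x : {x // x ∈ X}, u (x : V) = (p x : V)) :
    LinearIndependent R (fun x : {x // x ∈ X} => (x : V)) ∨
    ∃ (m : ℕ) (v : Fin m → V), LinearIndependent R v ∧
      (X : Set V) = Set.range v ∪ {-(∑ i, v i)} :=
  stmt_2_general X hperm
end

section
/- Let V be a left vector space over a division ring R, let x₁, …, x_m ∈ V be linearly independent, and let x_{m+1} = −(x₁ + ⋯ + x_m). Then every permutation of the set X = {x₁, …, x_m, x_{m+1}} extends to a linear automorphism of V: for every bijection p : X → X there exists a linear automorphism u of V with u(x) = p(x) for all x ∈ X. -/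
/-!
Put `x_{m+1} = -(x₁ + ⋯ + x_m)`, so that `x₁ + ⋯ + x_{m+1} = 0`. For a permutation `σ` of
`{1, …, m+1}`, the linear map on `W = span {x₁, …, x_m}` with `x_i ↦ x_{σ i}` for `i ≤ m` also
sends `x_{m+1}` to `x_{σ (m+1)}`, because the relation `∑ x_i = 0` is invariant under `σ`; the
maps for `σ` and `σ⁻¹` are inverse to each other. Extending by the identity on a complement of
`W` gives an automorphism of `V`. If the `x_i` are pairwise distinct, every permutation of `X`
comes from some `σ`; otherwise `X` is a single point (`m = 0`, or `m = 1` in characteristic 2).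
-/

open Function Set

section AddCommGroup

variable {M N : Type*} [AddCommGroup M] [AddCommGroup N] {m : ℕ}

def snocNegSum (v : Fin m → M) : Fin (m + 1) → M :=
  Fin.snoc v (-∑ i, v i)

@[simp]
theorem snocNegSum_castSucc (v : Fin m → M) (i : Fin m) :
    snocNegSum v i.castSucc = v i :=
  Fin.snoc_castSucc ..

@[simp]
theorem snocNegSum_last (v : Fin m → M) : snocNegSum v (Fin.last m) = -∑ i, v i :=
  Fin.snoc_last ..

theorem sum_snocNegSum_comp_perm (v : Fin m → M) (σ : Equiv.Perm (Fin (m + 1))) :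
    ∑ i, snocNegSum v (σ i) = 0 := by
  rw [Equiv.sum_comp σ, Fin.sum_univ_castSucc]
  simp

theorem range_snocNegSum (v : Fin m → M) :
    range (snocNegSum v) = range v ∪ {-∑ i, v i} := by
  simp [snocNegSum, Fin.range_snoc]

theorem map_snocNegSum {F : Type*} [FunLike F M N] [AddMonoidHomClass F M N] (f : F)
    (v : Fin m → M) (i : Fin (m + 1)) : f (snocNegSum v i) = snocNegSum (f ∘ v) i := by
  induction i using Fin.lastCases <;> simp [map_sum]

end AddCommGroup

theorem Equiv.exists_perm_comp_eq {ι α : Type*} {e : ι → α} (he : Injective e) {X : Set α}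
    (hX : range e = X) (p : X ≃ X) :
    ∃ σ : Equiv.Perm ι, ∀ i (hi : e i ∈ X), (p ⟨e i, hi⟩ : α) = e (σ i) := by
  subst hX
  refine ⟨(Equiv.ofInjective e he).trans (p.trans (Equiv.ofInjective e he).symm), fun i hi => ?_⟩
  simp [Equiv.apply_ofInjective_symm]

section Basis

variable {R M : Type*} [Ring R] [AddCommGroup M] [Module R M] {m : ℕ}

theorem Module.Basis.exists_linearEquiv_snocNegSum (b : Module.Basis (Fin m) R M)
    (σ : Equiv.Perm (Fin (m + 1))) :
    ∃ φ : M ≃ₗ[R] M, ∀ i, φ (snocNegSum b i) = snocNegSum b (σ i) := by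
  let f (τ : Equiv.Perm (Fin (m + 1))) : M →ₗ[R] M :=
    b.constr ℕ fun i => snocNegSum b (τ i.castSucc)
  have hf (τ i) : f τ (snocNegSum b i) = snocNegSum b (τ i) := by
    induction i using Fin.lastCases with
    | cast i => simp [f]
    | last =>
      have := sum_snocNegSum_comp_perm b τ
      rw [Fin.sum_univ_castSucc] at this
      simpa [f, map_sum] using neg_eq_of_add_eq_zero_right this
  have hinv (τ : Equiv.Perm (Fin (m + 1))) : (f τ).comp (f τ.symm) = LinearMap.id :=
    b.ext fun i => by simpa using congrArg (f τ) (hf τ.symm i.castSucc) |>.trans (hf τ _)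
  exact ⟨.ofLinearMap (f σ) (f σ.symm) (hinv σ) (by simpa using hinv σ.symm), hf σ⟩

end Basis

theorem Submodule.exists_linearEquiv_extend {K V : Type*} [DivisionRing K] [AddCommGroup V]
    [Module K V] (p : Submodule K V) (φ : p ≃ₗ[K] p) :
    ∃ u : V ≃ₗ[K] V, ∀ x : p, u x = φ x := by
  obtain ⟨q, hpq⟩ := p.exists_isCompl
  refine ⟨((p.prodEquivOfIsCompl q hpq).symm.trans (φ.prodCongr (.refl K q))).trans
    (p.prodEquivOfIsCompl q hpq), fun x => ?_⟩
  simp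

namespace LinearIndependent

variable {K V : Type*} [DivisionRing K] [AddCommGroup V] [Module K V] {m : ℕ} {v : Fin m → V}

theorem exists_linearEquiv_snocNegSum (hv : LinearIndependent K v)
    (σ : Equiv.Perm (Fin (m + 1))) :
    ∃ u : V ≃ₗ[K] V, ∀ i, u (snocNegSum v i) = snocNegSum v (σ i) := by
  let b := Module.Basis.span hv
  let W := Submodule.span K (range v)
  have hb (j : Fin (m + 1)) : W.subtype (snocNegSum b j) = snocNegSum v j := by
    rw [map_snocNegSum]
    congr 1
    exact funext (Module.Basis.coe_span_apply hv)
  obtain ⟨φ, hφ⟩ := b.exists_linearEquiv_snocNegSum σ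
  obtain ⟨u, hu⟩ := W.exists_linearEquiv_extend φ
  refine ⟨u, fun i => ?_⟩
  rw [← hb, ← hb, ← hφ]
  exact hu _

theorem injective_snocNegSum_or_subsingleton (hv : LinearIndependent K v) :
    Injective (snocNegSum v) ∨ (range (snocNegSum v)).Subsingleton := by
  by_cases hs : -∑ i, v i ∈ range v
  · right
    obtain ⟨j, hj⟩ := hs
    have hrel : ∑ i, (Pi.single j 1 + 1 : Fin m → K) i • v i = 0 := by
      simp [add_smul, Finset.sum_add_distrib, hj]
    have hunique (i : Fin m) : i = j := by
      by_contra hij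
      simpa [hij] using Fintype.linearIndependent_iff.mp hv _ hrel i
    refine subsingleton_of_forall_eq (v j) ?_
    rintro - ⟨i, rfl⟩
    induction i using Fin.lastCases with
    | cast i => simp [hunique i]
    | last => simp [hj]
  · exact .inl (Fin.snoc_injective_of_injective hv.injective hs)

end LinearIndependent

/-- **Example 1 (Pankov).** If `x₁, …, x_m` are linearly independent and
`x_{m+1} = -(x₁ + ⋯ + x_m)`, then every permutation of
`X = {x₁, …, x_m, x_{m+1}}` extends to a linear automorphism of `V`. -/
theorem stmt_3 {R V : Type*} [DivisionRing R] [AddCommGroup V] [Module R V]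
    (m : ℕ) (v : Fin m → V) (hv : LinearIndependent R v)
    (X : Set V) (hX : X = Set.range v ∪ {-(∑ i, v i)}) :
    ∀ p : X ≃ X, ∃ u : V ≃ₗ[R] V, ∀ x : X, u (x : V) = (p x : V) := by
  intro p
  have hrange : range (snocNegSum v) = X := hX ▸ range_snocNegSum v
  rcases hv.injective_snocNegSum_or_subsingleton with he | hsub
  · obtain ⟨σ, hσ⟩ := Equiv.exists_perm_comp_eq he hrange p
    obtain ⟨u, hu⟩ := hv.exists_linearEquiv_snocNegSum σ
    refine ⟨u, fun ⟨x, hx⟩ => ?_⟩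
    obtain ⟨i, rfl⟩ := hrange ▸ hx
    rw [hu, hσ]
  · rw [hrange] at hsub
    exact ⟨.refl R V, fun x => hsub x.2 (p x).2⟩
end

section
/- Let V and V' be left vector spaces over division rings R and R' with dim V = n ≥ 2 finite, and let g : V → V' be a non-trivial GL-mapping. Let V_g denote the R'-subspace of V' spanned by g(V). Then: (1) for every linear automorphism u of V there exists a unique linear automorphism ū of V_g such that g ∘ u = ū ∘ g; (2) the assignment u ↦ ū is a group homomorphism from GL(V) to GL(V_g). -/
/-!
An automorphism `u'` of `V'` with `g ∘ u = u' ∘ g` maps `g(V)` onto itself (as `u` is onto),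
hence restricts to an automorphism of `V_g`. A linear map on `V_g` is determined by its values on the
spanning set `g(V)`, so this restriction depends only on `u`; uniqueness then forces `u ↦ ū` to
preserve identities and products.
-/

open Submodule

namespace GLMapping

section Span

variable {R' V V' : Type*} [Semiring R'] [AddCommMonoid V'] [Module R' V']

variable (R') in
def codRestrictSpan (g : V → V') : V → span R' (Set.range g) :=
  fun x => ⟨g x, subset_span ⟨x, rfl⟩⟩

theorem span_range_codRestrictSpan (g : V → V') :
    span R' (Set.range (codRestrictSpan R' g)) = ⊤ := by
  convert span_span_coe_preimage (R := R') (s := Set.range g)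
  ext ⟨y, _⟩
  simp [codRestrictSpan]

theorem linearMap_ext_on_codRestrictSpan {M : Type*} [AddCommMonoid M] [Module R' M]
    {g : V → V'} {f₁ f₂ : span R' (Set.range g) →ₗ[R'] M}
    (h : ∀ x, f₁ (codRestrictSpan R' g x) = f₂ (codRestrictSpan R' g x)) : f₁ = f₂ :=
  LinearMap.ext_on_range (span_range_codRestrictSpan g) h

def Intertwines (g : V → V') (u : V → V)
    (e : span R' (Set.range g) ≃ₗ[R'] span R' (Set.range g)) : Prop :=
  ∀ x, e (codRestrictSpan R' g x) = codRestrictSpan R' g (u x)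

variable {g : V → V'} {u v : V → V}
  {e f : span R' (Set.range g) ≃ₗ[R'] span R' (Set.range g)}

theorem Intertwines.unique (he : Intertwines g u e) (hf : Intertwines g u f) : e = f :=
  LinearEquiv.toLinearMap_injective <|
    linearMap_ext_on_codRestrictSpan fun x => (he x).trans (hf x).symm

theorem intertwines_id : Intertwines g id (LinearEquiv.refl R' (span R' (Set.range g))) :=
  fun _ => rfl

theorem Intertwines.comp (he : Intertwines g u e) (hf : Intertwines g v f) :
    Intertwines g (u ∘ v) (f.trans e) :=
  fun x => (congrArg e (hf x)).trans (he (v x))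

theorem exists_intertwines_of_semiconj (hu : Function.Surjective u) (u' : V' ≃ₗ[R'] V')
    (hg : g ∘ u = u' ∘ g) : ∃ e, Intertwines (R' := R') g u e := by
  have hrange : u' '' Set.range g = Set.range g := by
    rw [← Set.range_comp, ← hg, Set.range_comp, hu.range_eq, Set.image_univ]
  have hmap : (span R' (Set.range g)).map (u' : V' →ₗ[R'] V') = span R' (Set.range g) := by
    rw [map_span, LinearEquiv.coe_coe, hrange]
  exact ⟨u'.ofSubmodules _ _ hmap, fun x => Subtype.ext (congrFun hg x).symm⟩

end Span

section Hom

variable {R R' V V' : Type*} [Semiring R] [Semiring R'] [AddCommMonoid V] [Module R V]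
  [AddCommMonoid V'] [Module R' V'] {g : V → V'}

noncomputable def inducedHom (h : ∀ u : V ≃ₗ[R] V, ∃ e, Intertwines (R' := R') g u e) :
    (V ≃ₗ[R] V) →* (span R' (Set.range g) ≃ₗ[R'] span R' (Set.range g)) where
  toFun u := (h u).choose
  map_one' := (h 1).choose_spec.unique intertwines_id
  map_mul' u v := (h (u * v)).choose_spec.unique <| (h u).choose_spec.comp (h v).choose_spec

theorem intertwines_inducedHom (h : ∀ u : V ≃ₗ[R] V, ∃ e, Intertwines (R' := R') g u e)
    (u : V ≃ₗ[R] V) : Intertwines g u (inducedHom h u) :=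
  (h u).choose_spec

end Hom

end GLMapping

theorem stmt_4_general {R R' V V' : Type*} [DivisionRing R] [DivisionRing R']
    [AddCommGroup V] [Module R V] [AddCommGroup V'] [Module R' V']
    (g : V → V')
    (hGL : ∀ u : V ≃ₗ[R] V, ∃ u' : V' ≃ₗ[R'] V', g ∘ ⇑u = ⇑u' ∘ g) :
    (∀ u : V ≃ₗ[R] V,
      ∃! ubar : (Submodule.span R' (Set.range g)) ≃ₗ[R'] (Submodule.span R' (Set.range g)),
        ∀ x : V, (ubar ⟨g x, Submodule.subset_span ⟨x, rfl⟩⟩ : V') = g (u x)) ∧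
    (∃ Φ : (V ≃ₗ[R] V) →*
        ((Submodule.span R' (Set.range g)) ≃ₗ[R'] (Submodule.span R' (Set.range g))),
        ∀ (u : V ≃ₗ[R] V) (x : V),
          (Φ u ⟨g x, Submodule.subset_span ⟨x, rfl⟩⟩ : V') = g (u x)) := by
  have hex : ∀ u : V ≃ₗ[R] V, ∃ e, GLMapping.Intertwines (R' := R') g u e := fun u =>
    let ⟨u', hu'⟩ := hGL u
    GLMapping.exists_intertwines_of_semiconj u.surjective u' hu'
  refine ⟨fun u => ?_, GLMapping.inducedHom hex,
    fun u x => congrArg Subtype.val (GLMapping.intertwines_inducedHom hex u x)⟩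
  obtain ⟨e, he⟩ := hex u
  exact ⟨e, fun x => congrArg Subtype.val (he x),
    fun e' he' => GLMapping.Intertwines.unique (fun x => Subtype.ext (he' x)) he⟩

/-- **Lemma 1 (Pankov).** For a non-trivial GL-mapping `g : V → V'`: (1) for every
`u ∈ GL(V)` there is a unique `ubar ∈ GL(V_g)` with `g ∘ u = ubar ∘ g`, where `V_g` is the
subspace of `V'` spanned by `g(V)`; (2) `u ↦ ubar` is a group homomorphism
`GL(V) → GL(V_g)`. -/
theorem stmt_4 {R R' V V' : Type*} [DivisionRing R] [DivisionRing R']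
    [AddCommGroup V] [Module R V] [AddCommGroup V'] [Module R' V']
    (n : ℕ) (hn : 2 ≤ n) [FiniteDimensional R V] (hdim : Module.finrank R V = n)
    (g : V → V')
    (hGL : ∀ u : V ≃ₗ[R] V, ∃ u' : V' ≃ₗ[R'] V', g ∘ ⇑u = ⇑u' ∘ g)
    (hnt : ∃ x y : V, x ≠ 0 ∧ y ≠ 0 ∧ g x ≠ g y) :
    (∀ u : V ≃ₗ[R] V,
      ∃! ubar : (Submodule.span R' (Set.range g)) ≃ₗ[R'] (Submodule.span R' (Set.range g)),
        ∀ x : V, (ubar ⟨g x, Submodule.subset_span ⟨x, rfl⟩⟩ : V') = g (u x)) ∧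
    (∃ Φ : (V ≃ₗ[R] V) →*
        ((Submodule.span R' (Set.range g)) ≃ₗ[R'] (Submodule.span R' (Set.range g))),
        ∀ (u : V ≃ₗ[R] V) (x : V),
          (Φ u ⟨g x, Submodule.subset_span ⟨x, rfl⟩⟩ : V') = g (u x)) :=
  stmt_4_general g hGL
end

section
/- Let V and V' be left vector spaces over division rings R and R' with dim V = n ≥ 2 finite, and let g : V → V' be a non-trivial GL-mapping such that the R'-subspace spanned by g(V) has dimension at most n. Then g(0) = 0. -/
/-!
Write `e` for a basis of `V`. The `n + 1` vectors `g 0, g (e 1), …, g (e n)` lie in a space of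
dimension at most `n`, so `c₀ • g 0 + ∑ cᵢ • g (e i) = 0` for some coefficients, not all zero.
Every `u'` fixes `g 0` (because `u 0 = 0`), so the same relation holds with `e` replaced by any
basis `f`. If some `c j ≠ 0`, compare `f` with the basis obtained from it by replacing `f j` by
`f j + f k`: this gives `g v = g (v + w)` for every independent pair `v, w`, which makes `g`
constant on `V \ {0}`. So every `cᵢ` vanishes, `c₀ ≠ 0`, and `c₀ • g 0 = 0` gives `g 0 = 0`.
-/

open Module

section
variable {R V : Type*} [DivisionRing R] [AddCommGroup V] [Module R V]

theorem Module.Basis.sumExtend_apply_inl_s12 {κ : Type*} {v : κ → V} (hv : LinearIndependent R v)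
    (i : κ) : Basis.sumExtend hv (.inl i) = v i := by
  simp only [Basis.sumExtend, Equiv.Set.sumDiffSubset, Equiv.trans_def, Basis.coe_reindex,
    Basis.coe_extend, Function.comp_apply]
  rfl

theorem Module.Basis.exists_apply_eq_of_linearIndependent {ι κ : Type*} [Finite κ]
    (b : Basis ι R V) {v : κ → V} (hv : LinearIndependent R v) {a : κ → ι} (ha : a.Injective) :
    ∃ f : Basis ι R V, ∀ i, f (a i) = v i := by
  let φ := (Basis.sumExtend hv).indexEquiv b
  obtain ⟨σ, hσ⟩ :=
    Equiv.Perm.exists_extending_pair (φ ∘ .inl) a (φ.injective.comp Sum.inl_injective) ha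
  refine ⟨(Basis.sumExtend hv).reindex (φ.trans σ), fun i => ?_⟩
  rw [Basis.reindex_apply, (φ.trans σ).symm_apply_eq.mpr (hσ i).symm, Basis.sumExtend_apply_inl_s12]

theorem Module.Basis.exists_apply_eq_add {ι : Type*} (f : Basis ι R V) {j k : ι} (hjk : j ≠ k) :
    ∃ f' : Basis ι R V, f' j = f j + f k ∧ ∀ i ≠ j, f' i = f i := by
  have hkj : f.coord j (f k) = 0 := by simp [Basis.coord_apply, hjk]
  refine ⟨f.map (LinearEquiv.transvection hkj), ?_, fun i hi => ?_⟩
  · simp [LinearMap.transvection.apply]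
  · simp [LinearMap.transvection.apply, hi]

theorem apply_eq_apply_of_ne_zero {X : Type*} {g : V → X} (hrank : 1 < Module.rank R V)
    (hadd : ∀ v w : V, LinearIndependent R ![v, w] → g v = g (v + w))
    {v w : V} (hv : v ≠ 0) (hw : w ≠ 0) : g v = g w := by
  have hpair (v w : V) (hvw : LinearIndependent R ![v, w]) : g v = g w := by
    rw [hadd v w hvw, add_comm, ← hadd w v (LinearIndependent.pair_symm_iff.mp hvw)]
  by_cases hvw : LinearIndependent R ![v, w]
  · exact hpair v w hvw
  obtain ⟨a, rfl⟩ : ∃ a : R, a • v = w := by simpa [LinearIndependent.pair_iff' hv] using hvw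
  obtain ⟨z, hvz⟩ := exists_linearIndependent_pair_of_one_lt_rank hrank hv
  have hwz : LinearIndependent R ![a • v, z] := by
    rw [LinearIndependent.pair_iff' hw]
    intro b
    simpa [smul_smul] using (LinearIndependent.pair_iff' hv).mp hvz (b * a)
  exact (hpair v z hvz).trans (hpair _ z hwz).symm

end

section
variable {R R' V V' : Type*} [DivisionRing R] [DivisionRing R']
  [AddCommGroup V] [Module R V] [AddCommGroup V'] [Module R' V']

theorem sum_smul_apply_basis_eq_of_gl {g : V → V'}
    (hg : ∀ u : V ≃ₗ[R] V, ∃ u' : V' ≃ₗ[R'] V', g ∘ ⇑u = ⇑u' ∘ g)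
    {ι : Type*} [Fintype ι] {c₀ : R'} {c : ι → R'} {e : Basis ι R V}
    (he : c₀ • g 0 + ∑ i, c i • g (e i) = 0) (f : Basis ι R V) :
    ∑ i, c i • g (f i) = ∑ i, c i • g (e i) := by
  obtain ⟨u', hu'⟩ := hg (e.equiv f (Equiv.refl ι))
  have hu'g (x : V) : u' (g x) = g (e.equiv f (Equiv.refl ι) x) := (congrFun hu' x).symm
  have hsum : ∑ i, c i • g (e i) = -(c₀ • g 0) := eq_neg_of_add_eq_zero_right he
  calc ∑ i, c i • g (f i) = u' (∑ i, c i • g (e i)) := by simp [map_sum, hu'g]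
    _ = ∑ i, c i • g (e i) := by rw [hsum, map_neg, map_smul, hu'g, map_zero]

theorem apply_eq_apply_add_of_sum_smul_basis_eq {ι : Type*} [Fintype ι] (b : Basis ι R V)
    {g : V → V'} {c : ι → R'} {s : V'} (hs : ∀ f : Basis ι R V, ∑ i, c i • g (f i) = s)
    {j k : ι} (hjk : j ≠ k) (hj : c j ≠ 0) {v w : V} (hvw : LinearIndependent R ![v, w]) :
    g v = g (v + w) := by
  obtain ⟨f, hf⟩ := b.exists_apply_eq_of_linearIndependent hvw (a := ![j, k])
    (by simpa [Function.Injective, Fin.forall_fin_two] using ⟨hjk, hjk.symm⟩)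
  obtain ⟨f', hf'j, hf'⟩ := f.exists_apply_eq_add hjk
  have hdiff : ∑ i, c i • (g (f' i) - g (f i)) = c j • (g (f' j) - g (f j)) :=
    Finset.sum_eq_single j (fun i _ hi => by rw [hf' i hi, sub_self, smul_zero]) (by simp)
  have hzero : c j • (g (f' j) - g (f j)) = 0 := by
    rw [← hdiff]; simp [smul_sub, Finset.sum_sub_distrib, hs]
  have hfj : f j = v := hf 0
  have hfk : f k = w := hf 1
  rw [← hfj, ← hfk, ← hf'j]
  exact (sub_eq_zero.mp ((smul_eq_zero.mp hzero).resolve_left hj)).symm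

theorem not_linearIndependent_of_rank_lt {ι : Type*} [Fintype ι] {W : Submodule R' V'}
    {F : ι → V'} (hF : ∀ i, F i ∈ W) (hW : Module.rank R' W < Fintype.card ι) :
    ¬ LinearIndependent R' F := fun hli => by
  classical
  refine hW.not_ge ?_
  calc (Fintype.card ι : Cardinal) = Cardinal.mk (Set.range F) := by
        rw [Cardinal.mk_fintype, Set.card_range_of_injective hli.injective]
    _ = Module.rank R' (Submodule.span R' (Set.range F)) := (rank_span hli).symm
    _ ≤ Module.rank R' W :=
        Submodule.rank_mono (Submodule.span_le.mpr (Set.range_subset_iff.mpr hF))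

end

/-- **Lemma 8 (Pankov).** If `g` is a non-trivial GL-mapping with `dim V_g ≤ n`,
then `g(0) = 0`. -/
theorem stmt_12 {R R' V V' : Type*} [DivisionRing R] [DivisionRing R']
    [AddCommGroup V] [Module R V] [AddCommGroup V'] [Module R' V']
    (n : ℕ) (hn : 2 ≤ n) [FiniteDimensional R V] (hdim : Module.finrank R V = n)
    (g : V → V')
    (hGL : ∀ u : V ≃ₗ[R] V, ∃ u' : V' ≃ₗ[R'] V', g ∘ ⇑u = ⇑u' ∘ g)
    (hnt : ∃ x y : V, x ≠ 0 ∧ y ≠ 0 ∧ g x ≠ g y)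
    (hspan : Module.rank R' (Submodule.span R' (Set.range g)) ≤ n) :
    g 0 = 0 := by
  let e : Basis (Fin n) R V := Module.finBasisOfFinrankEq R V hdim
  have hdep : ¬ LinearIndependent R' (Fin.cons (g 0) (g ∘ e) : Fin (n + 1) → V') :=
    not_linearIndependent_of_rank_lt (W := Submodule.span R' (Set.range g))
      (fun i => Fin.cases (Submodule.subset_span ⟨0, rfl⟩)
        (fun i => Submodule.subset_span ⟨e i, rfl⟩) i)
      (hspan.trans_lt (by simp))
  obtain ⟨c, hc, i₀, hi₀⟩ := Fintype.not_linearIndependent_iff.mp hdep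
  simp only [Fin.sum_univ_succ, Fin.cons_zero, Fin.cons_succ, Function.comp_apply] at hc
  by_cases hj : ∃ j : Fin n, c j.succ ≠ 0
  · obtain ⟨j, hj⟩ := hj
    have : Nontrivial (Fin n) := Fin.nontrivial_iff_two_le.mpr hn
    obtain ⟨k, hkj⟩ := exists_ne j
    have hrank : 1 < Module.rank R V := by
      rw [← Module.finrank_eq_rank, hdim]; exact_mod_cast hn
    have hadd (v w : V) : LinearIndependent R ![v, w] → g v = g (v + w) :=
      apply_eq_apply_add_of_sum_smul_basis_eq e (sum_smul_apply_basis_eq_of_gl hGL hc) hkj.symm hj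
    obtain ⟨x, y, hx, hy, hxy⟩ := hnt
    exact absurd (apply_eq_apply_of_ne_zero hrank hadd hx hy) hxy
  · push Not at hj
    have hc₀ : c 0 ≠ 0 := by
      rcases Fin.eq_zero_or_eq_succ i₀ with rfl | ⟨i, rfl⟩
      · exact hi₀
      · exact absurd (hj i) hi₀
    simpa [hj, hc₀] using hc
end

section
/- Let V and V' be left vector spaces over division rings R and R' with dim V = n ≥ 2 finite, and let f : ℙ(V) → ℙ(V') be a non-constant PGL-mapping. Then f is injective. -/
/-!
If `f` identifies two distinct points, 2-transitivity carries that pair onto any other pair of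
distinct points, and the equivariance of `f` transports the coincidence along, so `f` is constant.
Linear automorphisms act 2-transitively on `ℙ(V)` in every dimension.
-/

open Function

theorem MulAction.injective_of_semiconj_of_isTwoPretransitive {G α β : Type*} [Group G]
    [MulAction G α] [IsMultiplyPretransitive G α 2] (f : α → β)
    (hf : ∀ g : G, ∃ φ : β → β, Semiconj f (g • ·) φ) (hnc : ∃ x y, f x ≠ f y) :
    Injective f := by
  intro x y hxy
  by_contra hne
  obtain ⟨a, b, hab⟩ := hnc
  rcases eq_or_ne a b with rfl | hab'
  · exact hab rfl
  obtain ⟨g, rfl, rfl⟩ := is_two_pretransitive_iff.mp ‹_› hne hab'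
  obtain ⟨φ, hφ⟩ := hf g
  exact hab (by rw [hφ, hφ, hxy])

theorem stmt_16_general {R R' V V' : Type*} [DivisionRing R] [DivisionRing R']
    [AddCommGroup V] [Module R V] [AddCommGroup V'] [Module R' V']
    (f : Projectivization R V → Projectivization R' V')
    (hPGL : ∀ u : V ≃ₗ[R] V, ∃ u' : V' ≃ₗ[R'] V',
        ∀ P, f (Projectivization.map u.toLinearMap u.injective P)
          = Projectivization.map u'.toLinearMap u'.injective (f P))
    (hnc : ∃ P Q, f P ≠ f Q) :
    Function.Injective f := by
  refine MulAction.injective_of_semiconj_of_isTwoPretransitive (G := V ≃ₗ[R] V) f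
    (fun u => ?_) hnc
  obtain ⟨u', hu'⟩ := hPGL u
  exact ⟨_, hu'⟩

/-- **Lemma 10(2) (Pankov).** A non-constant PGL-mapping `f : ℙ(V) → ℙ(V')`
(with `dim V = n ≥ 2` finite) is injective. -/
theorem stmt_16 {R R' V V' : Type*} [DivisionRing R] [DivisionRing R']
    [AddCommGroup V] [Module R V] [AddCommGroup V'] [Module R' V']
    (n : ℕ) (hn : 2 ≤ n) [FiniteDimensional R V] (hdim : Module.finrank R V = n)
    (f : Projectivization R V → Projectivization R' V')
    (hPGL : ∀ u : V ≃ₗ[R] V, ∃ u' : V' ≃ₗ[R'] V',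
        ∀ P, f (Projectivization.map u.toLinearMap u.injective P)
          = Projectivization.map u'.toLinearMap u'.injective (f P))
    (hnc : ∃ P Q, f P ≠ f Q) :
    Function.Injective f :=
  stmt_16_general f hPGL hnc
end

section
/- Let V be a left vector space over a division ring R with dim V = n ≥ 2 finite, let V' be a left vector space over a field R', and let f : ℙ(V) → ℙ(V') be a non-constant PGL-mapping. Then f transfers every independent subset of ℙ(V) consisting of n−1 elements to an independent subset of ℙ(V'): if P₁, …, P_{n−1} ∈ ℙ(V) form an independent subset, then f(P₁), …, f(P_{n−1}) form an independent subset of ℙ(V'). -/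
/-!
Suppose `f` maps some independent `k`-tuple, `k ≤ n - 1`, to a dependent one, and let `k = m + 1`
be minimal. Since `GL(V)` acts transitively on independent tuples of a given length, `f` maps
every independent `(m+1)`-tuple to a circuit: a dependent tuple whose `m`-subtuples are all
independent. If `u ∈ GL(V)` fixes the points of an independent `(m+1)`-tuple `r`, the vectors of
the circuit `f ∘ r` are eigenvectors of the map `u'` attached to `u`, so `u'` is a scalar on their
span; that span contains `f P` whenever `P` is outside the span of `r`, whence `f (u P) = f P`.
For `P ≠ Q`, since `m + 2 ≤ n`, one can take `r` in a hyperplane missing `P` and `Q`, and `u`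
with `u P = Q`; so `f` would be constant.
-/

open Module Submodule
open scoped LinearAlgebra.Projectivization

theorem exists_linearEquiv_apply_eq_s17 {K V ι : Type*} [DivisionRing K] [AddCommGroup V]
    [Module K V] [FiniteDimensional K V] [Fintype ι] {v w : ι → V}
    (hv : LinearIndependent K v) (hw : LinearIndependent K w) :
    ∃ u : V ≃ₗ[K] V, ∀ i, u (v i) = w i := by
  obtain ⟨C, hC⟩ := (span K (Set.range v)).exists_isCompl
  obtain ⟨D, hD⟩ := (span K (Set.range w)).exists_isCompl
  have hCD : finrank K C = finrank K D := by
    have := finrank_add_eq_of_isCompl hC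
    have := finrank_add_eq_of_isCompl hD
    rw [finrank_span_eq_card hv, finrank_span_eq_card hw] at *
    omega
  refine ⟨(prodEquivOfIsCompl _ C hC).symm ≪≫ₗ
    ((Basis.span hv).equiv (Basis.span hw) (Equiv.refl ι)).prodCongr
      (LinearEquiv.ofFinrankEq C D hCD) ≪≫ₗ prodEquivOfIsCompl _ D hD, fun i => ?_⟩
  have hvi : v i = (Basis.span hv i : V) := by rw [Basis.span_apply]
  rw [LinearEquiv.trans_apply, LinearEquiv.trans_apply, hvi, prodEquivOfIsCompl_symm_apply_left,
    LinearEquiv.prodCongr_apply, Basis.equiv_apply, map_zero]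
  simp [Basis.span_apply]

theorem Module.Basis.sumExtend_apply_inl_s17 {K V ι : Type*} [DivisionRing K] [AddCommGroup V]
    [Module K V] {v : ι → V} (hv : LinearIndependent K v) (i : ι) :
    Basis.sumExtend hv (Sum.inl i) = v i := by
  simp only [Basis.sumExtend, Basis.reindex_apply, Basis.coe_extend]
  rfl

theorem exists_linearIndependent_cons_cons {K V : Type*} [DivisionRing K] [AddCommGroup V]
    [Module K V] [FiniteDimensional K V] {x y : V} (hxy : LinearIndependent K ![x, y]) {m : ℕ}
    (hm : m + 2 ≤ finrank K V) :
    ∃ r : Fin (m + 1) → V, LinearIndependent K (Fin.cons x r : Fin (m + 2) → V) ∧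
      LinearIndependent K (Fin.cons y r : Fin (m + 2) → V) := by
  set φ : Dual K V := (Basis.sumExtend hxy).sumCoords
  have hφ : ∀ i, φ (![x, y] i) = 1 := fun i => by
    rw [← Basis.sumExtend_apply_inl_s17 hxy, Basis.sumCoords_self_apply]
  have hφx : φ x = 1 := hφ 0
  have hφy : φ y = 1 := hφ 1
  have hφ0 : φ ≠ 0 := fun h => by simp [h] at hφx
  obtain ⟨r, hr⟩ := exists_linearIndependent_of_le_finrank (R := K) (M := LinearMap.ker φ)
    (n := m + 1) (by have := Dual.finrank_ker_add_one_of_ne_zero hφ0; omega)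
  have hspan : span K (Set.range ((LinearMap.ker φ).subtype ∘ r)) ≤ LinearMap.ker φ := by
    rw [span_le]
    rintro _ ⟨i, rfl⟩
    exact (r i).2
  have hr' := hr.map' _ (ker_subtype _)
  refine ⟨_, linearIndependent_finCons.2 ⟨hr', fun h => ?_⟩,
    linearIndependent_finCons.2 ⟨hr', fun h => ?_⟩⟩
  · simpa [hφx] using hspan h
  · simpa [hφy] using hspan h

theorem LinearMap.exists_eqOn_span_smul_of_circuit {K V : Type*} [Field K] [AddCommGroup V]
    [Module K V] {m : ℕ} (g : V →ₗ[K] V) {z : Fin (m + 1) → V} {a : Fin (m + 1) → K}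
    (hg : ∀ i, g (z i) = a i • z i) (hz : ¬ LinearIndependent K z)
    (hsub : ∀ i : Fin (m + 1), LinearIndependent K (z ∘ i.succAbove)) :
    ∃ μ : K, ∀ v ∈ span K (Set.range z), g v = μ • v := by
  have relation_eq_zero : ∀ (c : Fin (m + 1) → K) (i : Fin (m + 1)), ∑ j, c j • z j = 0 →
      c i = 0 → ∀ j, c j = 0 := by
    intro c i hc hci j
    rw [Fin.sum_univ_succAbove _ i, hci, zero_smul, zero_add] at hc
    obtain rfl | hji := eq_or_ne j i
    · exact hci
    · obtain ⟨k, rfl⟩ := Fin.exists_succAbove_eq hji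
      exact Fintype.linearIndependent_iff.1 (hsub i) _ hc k
  obtain ⟨c, hc, i₀, hci₀⟩ := Fintype.not_linearIndependent_iff.1 hz
  have hc_ne : ∀ j, c j ≠ 0 := fun j hcj => hci₀ (relation_eq_zero c j hc hcj i₀)
  have hrel : ∑ j, (c j * (a j - a i₀)) • z j = 0 := calc
    _ = g (∑ j, c j • z j) - a i₀ • ∑ j, c j • z j := by
      simp only [map_sum, map_smul, hg, Finset.smul_sum, smul_smul, ← Finset.sum_sub_distrib,
        ← sub_smul, mul_sub, mul_comm (a i₀)]
    _ = 0 := by rw [hc, map_zero, smul_zero, sub_zero]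
  have ha : ∀ j, a j = a i₀ := fun j => sub_eq_zero.1 <|
    (mul_eq_zero.1 (relation_eq_zero _ i₀ hrel (by simp) j)).resolve_left (hc_ne j)
  refine ⟨a i₀, fun v hv => ?_⟩
  have heq : Set.EqOn g (a i₀ • LinearMap.id : V →ₗ[K] V) (Set.range z) := by
    rintro _ ⟨j, rfl⟩
    simp [hg, ha j]
  exact LinearMap.eqOn_span' heq hv

namespace Projectivization

section DivisionRing

variable {K V W : Type*} [DivisionRing K] [AddCommGroup V] [Module K V] [AddCommGroup W]
  [Module K W]

theorem map_eq_iff_exists_smul_rep (u : V →ₗ[K] W) (hu : Function.Injective u) (P : ℙ K V)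
    (Q : ℙ K W) : map u hu P = Q ↔ ∃ a : K, a • Q.rep = u P.rep := by
  conv_lhs => rw [← P.mk_rep, ← Q.mk_rep, map_mk]
  exact mk_eq_mk_iff' ..

theorem independent_cons_iff {m : ℕ} {P : ℙ K V} {s : Fin m → ℙ K V} :
    Independent (Fin.cons P s : Fin (m + 1) → ℙ K V) ↔
      Independent s ∧ P.rep ∉ span K (Set.range (Projectivization.rep ∘ s)) := by
  rw [independent_iff, independent_iff, Fin.comp_cons, linearIndependent_finCons]

theorem Independent.comp {ι κ : Type*} {s : ι → ℙ K V} (hs : Independent s) {g : κ → ι}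
    (hg : Function.Injective g) : Independent (s ∘ g) :=
  independent_iff.2 ((independent_iff.1 hs).comp g hg)

theorem Independent.map {ι : Type*} {s : ι → ℙ K V} (hs : Independent s) (u : V →ₗ[K] W)
    (hu : Function.Injective u) : Independent (map u hu ∘ s) := by
  have := Independent.mk (u ∘ Projectivization.rep ∘ s)
    (fun i => by simp [map_eq_zero_iff u hu, rep_nonzero])
    ((independent_iff.1 hs).map' u (LinearMap.ker_eq_bot.2 hu))
  convert this with i
  conv_lhs => rw [Function.comp_apply, ← (s i).mk_rep]
  exact map_mk ..

theorem exists_map_eq [FiniteDimensional K V] {ι : Type*} [Fintype ι] {A B : ι → ℙ K V}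
    (hA : Independent A) (hB : Independent B) :
    ∃ u : V ≃ₗ[K] V, ∀ i, map u.toLinearMap u.injective (A i) = B i := by
  obtain ⟨u, hu⟩ := exists_linearEquiv_apply_eq_s17 (independent_iff.1 hA) (independent_iff.1 hB)
  exact ⟨u, fun i => (map_eq_iff_exists_smul_rep _ _ _ _).2
    ⟨1, by rw [one_smul]; exact (hu i).symm⟩⟩

theorem exists_independent_cons_cons [FiniteDimensional K V] {P Q : ℙ K V} (hPQ : P ≠ Q)
    {m : ℕ} (hm : m + 2 ≤ finrank K V) :
    ∃ r : Fin (m + 1) → ℙ K V, Independent (Fin.cons P r : Fin (m + 2) → ℙ K V) ∧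
      Independent (Fin.cons Q r : Fin (m + 2) → ℙ K V) := by
  obtain ⟨r, hPr, hQr⟩ :=
    exists_linearIndependent_cons_cons (linearIndependent_pair_iff_ne.2 hPQ) hm
  have hr0 : ∀ i, r i ≠ 0 := (linearIndependent_finCons.1 hPr).1.ne_zero
  have hcons : ∀ X : ℙ K V, LinearIndependent K (Fin.cons X.rep r : Fin (m + 2) → V) →
      Independent (Fin.cons X (fun i => mk K (r i) (hr0 i)) : Fin (m + 2) → ℙ K V) := by
    intro X hX
    convert Independent.mk _ hX.ne_zero hX with i
    cases i using Fin.cases <;> simp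
  exact ⟨_, hcons P hPr, hcons Q hQr⟩

end DivisionRing

section PGL

variable {R R' V V' : Type*} [DivisionRing R] [AddCommGroup V] [Module R V] [AddCommGroup V']

def IsPGLMap [DivisionRing R'] [Module R' V'] (f : ℙ R V → ℙ R' V') : Prop :=
  ∀ u : V ≃ₗ[R] V, ∃ u' : V' ≃ₗ[R'] V',
    ∀ P, f (map u.toLinearMap u.injective P) = map u'.toLinearMap u'.injective (f P)

def PreservesIndependence [DivisionRing R'] [Module R' V'] (f : ℙ R V → ℙ R' V') (k : ℕ) :
    Prop :=
  ∀ A : Fin k → ℙ R V, Independent A → Independent (f ∘ A)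

theorem preservesIndependence_zero [DivisionRing R'] [Module R' V'] (f : ℙ R V → ℙ R' V') :
    PreservesIndependence f 0 :=
  fun _ _ => independent_iff.2 linearIndependent_empty_type

variable [FiniteDimensional R V]

theorem IsPGLMap.not_independent_comp [DivisionRing R'] [Module R' V'] {f : ℙ R V → ℙ R' V'}
    (hf : IsPGLMap f) {k : ℕ} (hk : ¬PreservesIndependence f k) {A : Fin k → ℙ R V}
    (hA : Independent A) : ¬Independent (f ∘ A) := by
  intro hfA
  refine hk fun B hB => ?_
  obtain ⟨u, hu⟩ := exists_map_eq hA hB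
  obtain ⟨u', hu'⟩ := hf u
  have : f ∘ B = map u'.toLinearMap u'.injective ∘ (f ∘ A) :=
    funext fun i => by simp [← hu i, hu']
  exact this ▸ hfA.map _ _

variable [Field R'] [Module R' V'] {f : ℙ R V → ℙ R' V'} {m : ℕ}

theorem IsPGLMap.rep_mem_span_of_rep_notMem_span (hf : IsPGLMap f)
    (hm : PreservesIndependence f m) (hm' : ¬PreservesIndependence f (m + 1))
    {s : Fin m → ℙ R V} (hs : Independent s) {P : ℙ R V}
    (hP : P.rep ∉ span R (Set.range (Projectivization.rep ∘ s))) :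
    (f P).rep ∈ span R' (Set.range (Projectivization.rep ∘ f ∘ s)) := by
  have hdep := hf.not_independent_comp hm' (independent_cons_iff.2 ⟨hs, hP⟩)
  rw [Fin.comp_cons, independent_cons_iff] at hdep
  by_contra h
  exact hdep ⟨hm s hs, h⟩

theorem IsPGLMap.apply_map_eq_of_forall_map_eq (hf : IsPGLMap f)
    (hm : PreservesIndependence f m) (hm' : ¬PreservesIndependence f (m + 1))
    (u : V ≃ₗ[R] V) {r : Fin (m + 1) → ℙ R V}
    (hfix : ∀ i, map u.toLinearMap u.injective (r i) = r i) {P : ℙ R V}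
    (hP : Independent (Fin.cons P r : Fin (m + 2) → ℙ R V)) :
    f (map u.toLinearMap u.injective P) = f P := by
  obtain ⟨hr, hPr⟩ := independent_cons_iff.1 hP
  obtain ⟨u', hu'⟩ := hf u
  have heig : ∀ i, ∃ a : R', u' (f (r i)).rep = a • (f (r i)).rep := fun i =>
    ((map_eq_iff_exists_smul_rep _ _ _ _).1 (by rw [← hu', hfix])).imp fun _ h => h.symm
  choose a ha using heig
  obtain ⟨μ, hμ⟩ := u'.toLinearMap.exists_eqOn_span_smul_of_circuit ha
    (fun h => hf.not_independent_comp hm' hr (independent_iff.2 h))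
    (fun i => independent_iff.1 (hm _ (hr.comp (Fin.succAbove_right_injective))))
  have hfP : (f P).rep ∈ span R' (Set.range (Projectivization.rep ∘ f ∘ r)) :=
    span_mono (Set.range_comp_subset_range Fin.castSucc _)
      (hf.rep_mem_span_of_rep_notMem_span hm hm' (hr.comp (Fin.castSucc_injective _))
        fun h => hPr (span_mono (Set.range_comp_subset_range _ _) h))
  rw [hu', map_eq_iff_exists_smul_rep]
  exact ⟨μ, (hμ _ hfP).symm⟩

theorem IsPGLMap.eq_of_not_preservesIndependence_succ (hf : IsPGLMap f)
    (hm : PreservesIndependence f m) (hm' : ¬PreservesIndependence f (m + 1))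
    (hn : m + 2 ≤ finrank R V) (P Q : ℙ R V) : f P = f Q := by
  obtain rfl | hPQ := eq_or_ne P Q
  · rfl
  obtain ⟨r, hPr, hQr⟩ := exists_independent_cons_cons hPQ hn
  obtain ⟨u, hu⟩ := exists_map_eq hPr hQr
  calc f P = f (map u.toLinearMap u.injective P) :=
        (hf.apply_map_eq_of_forall_map_eq hm hm' u (fun i => by simpa using hu i.succ) hPr).symm
    _ = f Q := by simpa using congrArg f (hu 0)

end PGL

end Projectivization

theorem stmt_17_general {R R' V V' : Type*} [DivisionRing R] [Field R']
    [AddCommGroup V] [Module R V] [AddCommGroup V'] [Module R' V']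
    (n : ℕ) [FiniteDimensional R V] (hdim : Module.finrank R V = n)
    (f : Projectivization R V → Projectivization R' V')
    (hPGL : ∀ u : V ≃ₗ[R] V, ∃ u' : V' ≃ₗ[R'] V',
        ∀ P, f (Projectivization.map u.toLinearMap u.injective P)
          = Projectivization.map u'.toLinearMap u'.injective (f P))
    (hnc : ∃ P Q, f P ≠ f Q) :
    ∀ P : Fin (n - 1) → Projectivization R V,
      Projectivization.Independent P → Projectivization.Independent (f ∘ P) := by
  suffices ∀ k ≤ n - 1, Projectivization.PreservesIndependence f k from this (n - 1) le_rfl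
  intro k hk
  induction k with
  | zero => exact Projectivization.preservesIndependence_zero f
  | succ m ih =>
    by_contra hm'
    obtain ⟨P, Q, hPQ⟩ := hnc
    exact hPQ (Projectivization.IsPGLMap.eq_of_not_preservesIndependence_succ hPGL
      (ih (by omega)) hm' (by omega) P Q)

/-- **Lemma 12 (Pankov).** Let `V` be a vector space over a division ring with
`dim V = n ≥ 2` and `V'` a vector space over a field. A non-constant PGL-mapping
`f : ℙ(V) → ℙ(V')` transfers every independent subset consisting of `n−1` elements
to an independent subset. -/
theorem stmt_17 {R R' V V' : Type*} [DivisionRing R] [Field R']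
    [AddCommGroup V] [Module R V] [AddCommGroup V'] [Module R' V']
    (n : ℕ) (hn : 2 ≤ n) [FiniteDimensional R V] (hdim : Module.finrank R V = n)
    (f : Projectivization R V → Projectivization R' V')
    (hPGL : ∀ u : V ≃ₗ[R] V, ∃ u' : V' ≃ₗ[R'] V',
        ∀ P, f (Projectivization.map u.toLinearMap u.injective P)
          = Projectivization.map u'.toLinearMap u'.injective (f P))
    (hnc : ∃ P Q, f P ≠ f Q) :
    ∀ P : Fin (n - 1) → Projectivization R V,
      Projectivization.Independent P → Projectivization.Independent (f ∘ P) :=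
  stmt_17_general n hdim f hPGL hnc
end

section
/- Let V and V' be left vector spaces over division rings R and R' with dim V = n finite, and let l : V → V' be a strong semilinear embedding. Then l is a GL-mapping: for every linear automorphism u of V there exists a linear automorphism u' of V' such that l ∘ u = u' ∘ l. -/
/-!
Pick a basis `e` of `V`. By strongness, `l ∘ e` and `l ∘ u ∘ e` are linearly independent
families of `n` vectors in `V'`, and any two such finite families are exchanged by a linear
automorphism `u'` of `V'` (extend the isomorphism between their spans using complements).
Then `l ∘ u` and `u' ∘ l` are `σ`-semilinear maps agreeing on the basis `e`, hence equal.
-/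

theorem LinearIndependent.exists_linearEquiv_comp_eq {K V ι : Type*} [DivisionRing K]
    [AddCommGroup V] [Module K V] [Finite ι] {f g : ι → V}
    (hf : LinearIndependent K f) (hg : LinearIndependent K g) :
    ∃ e : V ≃ₗ[K] V, ⇑e ∘ f = g := by
  have : FiniteDimensional K (Submodule.span K (Set.range f)) :=
    FiniteDimensional.span_of_finite K (Set.finite_range f)
  obtain ⟨e, he⟩ := Submodule.exists_linearEquiv_restrict_eq
    (hf.linearCombinationEquiv.symm ≪≫ₗ hg.linearCombinationEquiv)
  refine ⟨e, funext fun i => ?_⟩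
  have hfi : hf.linearCombinationEquiv (Finsupp.single i 1) = f i := by simp
  have hgi : hg.linearCombinationEquiv (Finsupp.single i 1) = g i := by simp
  simp only [Function.comp_apply, ← hfi, ← he, LinearEquiv.trans_apply,
    LinearEquiv.symm_apply_apply, hgi]

theorem stmt_18_general {R R' V V' : Type*} [DivisionRing R] [DivisionRing R']
    [AddCommGroup V] [Module R V] [AddCommGroup V'] [Module R' V']
    (n : ℕ) [FiniteDimensional R V] (hdim : Module.finrank R V = n)
    (σ : R →+* R') (l : V →ₛₗ[σ] V')
    (hstrong : ∀ v : Fin n → V, LinearIndependent R v → LinearIndependent R' (⇑l ∘ v)) :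
    ∀ u : V ≃ₗ[R] V, ∃ u' : V' ≃ₗ[R'] V', ⇑l ∘ ⇑u = ⇑u' ∘ ⇑l := by
  intro u
  let e : Module.Basis (Fin n) R V := (Module.finBasis R V).reindex (finCongr hdim)
  obtain ⟨u', hu'⟩ := (hstrong _ e.linearIndependent).exists_linearEquiv_comp_eq
    (hstrong _ (e.map u).linearIndependent)
  refine ⟨u', ?_⟩
  have hcomp : l.comp u.toLinearMap = u'.toLinearMap.comp l := e.ext fun i => by
    simpa using (congrFun hu' i).symm
  exact congrArg DFunLike.coe hcomp

/-- **(Pankov, Introduction).** Every strong semilinear embedding `l : V → V'`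
(dim V = n finite) is a GL-mapping: for every `u ∈ GL(V)` there is `u' ∈ GL(V')`
with `l ∘ u = u' ∘ l`. -/
theorem stmt_18 {R R' V V' : Type*} [DivisionRing R] [DivisionRing R']
    [AddCommGroup V] [Module R V] [AddCommGroup V'] [Module R' V']
    (n : ℕ) [FiniteDimensional R V] (hdim : Module.finrank R V = n)
    (σ : R →+* R') (l : V →ₛₗ[σ] V') (hinj : Function.Injective l)
    (hstrong : ∀ v : Fin n → V, LinearIndependent R v → LinearIndependent R' (⇑l ∘ v)) :
    ∀ u : V ≃ₗ[R] V, ∃ u' : V' ≃ₗ[R'] V', ⇑l ∘ ⇑u = ⇑u' ∘ ⇑l :=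
  stmt_18_general n hdim σ l hstrong
end

section
/- Let V and V' be left vector spaces over division rings R and R' with dim V = n finite, let l : V → V' be a strong semilinear embedding, and suppose dim V' > n. Choose y ∈ V' not belonging to the R'-subspace spanned by l(V), and define g : V → V' by g(x) = l(x) for x ≠ 0 and g(0) = y. Then g is a GL-mapping and the R'-subspace of V' spanned by g(V) has dimension n+1. -/
/-! For every linear automorphism `u` of `V` and every basis `b`, both `l ∘ b` and `l ∘ u ∘ b`
are bases of `S = span (range l)`, so `l x ↦ l (u x)` is a linear automorphism of `S`. As
`y ∉ S`, some complement of `S` contains `y`; extending by the identity on it gives an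
automorphism of `V'` that fixes `y = g 0` and sends `g x = l x` to `l (u x) = g (u x)` for
`x ≠ 0`. The span of `g(V)` is `R' ∙ y ⊔ S`, with basis `Fin.snoc (l ∘ b) y`. -/

open Submodule Module

section SemilinearSpan

variable {ι R R' V V' : Type*} [Semiring R] [Semiring R'] [AddCommMonoid V] [Module R V]
  [AddCommMonoid V'] [Module R' V'] {σ : R →+* R'}

theorem Submodule.span_range_comp_basis (b : Basis ι R V) (l : V →ₛₗ[σ] V') :
    span R' (Set.range (l ∘ b)) = span R' (Set.range l) := by
  refine le_antisymm (span_mono (Set.range_comp_subset_range _ _)) (span_le.2 ?_)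
  rintro _ ⟨x, rfl⟩
  have hb : (⊤ : Submodule R V) ≤ comap l (span R' (Set.range (l ∘ b))) := by
    rw [← b.span_eq, span_le]
    rintro _ ⟨i, rfl⟩
    exact subset_span ⟨i, rfl⟩
  exact hb mem_top

theorem Submodule.span_range_eq_span_singleton_sup {l : V →ₛₗ[σ] V'} {g : V → V'} {y : V'}
    (hg0 : g 0 = y) (hgx : ∀ x, x ≠ 0 → g x = l x) :
    span R' (Set.range g) = (R' ∙ y) ⊔ span R' (Set.range l) := by
  rw [← span_insert]
  refine le_antisymm (span_le.2 ?_) (span_le.2 ?_)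
  · rintro _ ⟨x, rfl⟩
    rcases eq_or_ne x 0 with rfl | hx
    · exact subset_span (hg0 ▸ Set.mem_insert _ _)
    · exact subset_span (Set.mem_insert_of_mem _ ⟨x, (hgx x hx).symm⟩)
  · rintro _ (rfl | ⟨x, rfl⟩)
    · exact subset_span ⟨0, hg0⟩
    · rcases eq_or_ne x 0 with rfl | hx
      · simp
      · exact subset_span ⟨x, hgx x hx⟩

end SemilinearSpan

namespace Module.Basis

variable {ι R R' V V' : Type*} [Semiring R] [Ring R'] [AddCommMonoid V] [Module R V]
  [AddCommGroup V'] [Module R' V'] {σ : R →+* R'}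

noncomputable def spanRange (b : Basis ι R V) (l : V →ₛₗ[σ] V')
    (h : LinearIndependent R' (l ∘ b)) : Basis ι R' (span R' (Set.range l)) :=
  (Basis.span h).map (LinearEquiv.ofEq _ _ (span_range_comp_basis b l))

@[simp]
theorem coe_spanRange_apply (b : Basis ι R V) (l : V →ₛₗ[σ] V')
    (h : LinearIndependent R' (l ∘ b)) (i : ι) : (b.spanRange l h i : V') = l (b i) := by
  simp [spanRange, Basis.span_apply]

end Module.Basis

theorem LinearEquiv.exists_extend_of_isCompl {K M : Type*} [Ring K] [AddCommGroup M]
    [Module K M] {p q : Submodule K M} (h : IsCompl p q) (e : p ≃ₗ[K] p) :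
    ∃ u : M ≃ₗ[K] M, (∀ x : p, u x = e x) ∧ ∀ x ∈ q, u x = x := by
  let P := prodEquivOfIsCompl p q h
  refine ⟨P.symm.trans ((e.prodCongr (LinearEquiv.refl K q)).trans P), fun x => ?_,
    fun x hx => ?_⟩
  · simp [P]
  · change P ((e.prodCongr (LinearEquiv.refl K q)) (P.symm (⟨x, hx⟩ : q))) = x
    rw [prodEquivOfIsCompl_symm_apply_right]
    simp [P]

section Intertwine

variable {ι R R' V V' : Type*} [DivisionRing R] [DivisionRing R'] [AddCommGroup V] [Module R V]
  [AddCommGroup V'] [Module R' V'] {σ : R →+* R'}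

theorem exists_linearEquiv_intertwining_of_isCompl (l : V →ₛₗ[σ] V')
    (hl : ∀ b : Basis ι R V, LinearIndependent R' (l ∘ b)) (b : Basis ι R V)
    (u : V ≃ₗ[R] V) {q : Submodule R' V'} (hq : IsCompl (span R' (Set.range l)) q) :
    ∃ u' : V' ≃ₗ[R'] V', (∀ x, u' (l x) = l (u x)) ∧ ∀ z ∈ q, u' z = z := by
  let bu := b.map u
  let e := (b.spanRange l (hl b)).equiv (bu.spanRange l (hl bu)) (Equiv.refl ι)
  obtain ⟨u', he, hq'⟩ := LinearEquiv.exists_extend_of_isCompl hq e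
  let lS := l.codRestrict (span R' (Set.range l)) fun x => subset_span (Set.mem_range_self x)
  have hcomp : (span R' (Set.range l)).subtype.comp (e.toLinearMap.comp lS) =
      l.comp u.toLinearMap := by
    refine b.ext fun i => ?_
    have hbi : lS (b i) = b.spanRange l (hl b) i := Subtype.ext (by simp [lS])
    simp [e, bu, hbi, Basis.equiv_apply]
  exact ⟨u', fun x => (he (lS x)).trans (LinearMap.congr_fun hcomp x), hq'⟩

end Intertwine

theorem stmt_19_general {R R' V V' : Type*} [DivisionRing R] [DivisionRing R']
    [AddCommGroup V] [Module R V] [AddCommGroup V'] [Module R' V']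
    (n : ℕ) [FiniteDimensional R V] (hdim : Module.finrank R V = n)
    (σ : R →+* R') (l : V →ₛₗ[σ] V')
    (hstrong : ∀ v : Fin n → V, LinearIndependent R v → LinearIndependent R' (⇑l ∘ v))
    (y : V') (hy : y ∉ Submodule.span R' (Set.range l))
    (g : V → V') (hg0 : g 0 = y) (hgx : ∀ x : V, x ≠ 0 → g x = l x) :
    (∀ u : V ≃ₗ[R] V, ∃ u' : V' ≃ₗ[R'] V', g ∘ ⇑u = ⇑u' ∘ g) ∧
    Module.rank R' (Submodule.span R' (Set.range g)) = ((n + 1 : ℕ) : Cardinal) := by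
  let b : Basis (Fin n) R V := (Module.finBasis R V).reindex (finCongr hdim)
  have hl (b' : Basis (Fin n) R V) : LinearIndependent R' (l ∘ b') :=
    hstrong b' b'.linearIndependent
  refine ⟨fun u => ?_, ?_⟩
  · obtain ⟨q, hyq, hq⟩ := (disjoint_span_singleton_of_notMem hy).symm.exists_isCompl
    obtain ⟨u', hlu, hqu⟩ :=
      exists_linearEquiv_intertwining_of_isCompl l hl b u hq.symm
    refine ⟨u', funext fun x => ?_⟩
    rcases eq_or_ne x 0 with rfl | hx
    · simp [hg0, hqu y (hyq (mem_span_singleton_self y))]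
    · simp [hgx x hx, hgx (u x) (u.map_ne_zero_iff.2 hx), hlu]
  · have hyb : y ∉ span R' (Set.range (l ∘ b)) := by rwa [span_range_comp_basis]
    have hind := linearIndependent_finSnoc.2 ⟨hl b, hyb⟩
    rw [span_range_eq_span_singleton_sup hg0 hgx, ← span_range_comp_basis b l, ← span_insert,
      ← Fin.range_snoc, rank_eq_card_basis (Basis.span hind)]
    simp

/-- **Example 3 (Pankov).** Let `l : V → V'` be a strong semilinear embedding with
`dim V' > n = dim V`, and let `y ∈ V'` lie outside the subspace spanned by `l(V)`.
The map `g` with `g x = l x` for `x ≠ 0` and `g 0 = y` is a GL-mapping, and the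
subspace of `V'` spanned by `g(V)` has dimension `n + 1`. -/
theorem stmt_19 {R R' V V' : Type*} [DivisionRing R] [DivisionRing R']
    [AddCommGroup V] [Module R V] [AddCommGroup V'] [Module R' V']
    (n : ℕ) [FiniteDimensional R V] (hdim : Module.finrank R V = n)
    (σ : R →+* R') (l : V →ₛₗ[σ] V') (hinj : Function.Injective l)
    (hstrong : ∀ v : Fin n → V, LinearIndependent R v → LinearIndependent R' (⇑l ∘ v))
    (hbig : (n : Cardinal) < Module.rank R' V')
    (y : V') (hy : y ∉ Submodule.span R' (Set.range l))
    (g : V → V') (hg0 : g 0 = y) (hgx : ∀ x : V, x ≠ 0 → g x = l x) :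
    (∀ u : V ≃ₗ[R] V, ∃ u' : V' ≃ₗ[R'] V', g ∘ ⇑u = ⇑u' ∘ g) ∧
    Module.rank R' (Submodule.span R' (Set.range g)) = ((n + 1 : ℕ) : Cardinal) :=
  stmt_19_general n hdim σ l hstrong y hy g hg0 hgx
end
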